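/- arXiv:1909.02992 — 5 statements merged into one kernel-verified Lean document; each statement's English description precedes it below -/
import Mathlib

section
/- Let ℓ and d be positive integers with ℓ dividing d. Then ∑_{k : ℓ∣k, k∣d} s_{k,ℓ} = 3d · r_ℓ, where the sum is over positive integers k that are multiples of ℓ and divisors of d, r_ℓ denotes the number of elements a ∈ ℤ/(3ℓ) such that d(a) = ℓ, and s_{k,ℓ} denotes the number of pairs x = (a,b) ∈ ℤ/(3k) × ℤ/(3k) such that d(x) = k and d(a) = ℓ. -/
open Function Finset

/-- For an element `x` of an additive monoid, `dInv x` is the smallest positive integer `k`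
such that `(3k) • x = 0` (and `0` if no such `k` exists). -/
noncomputable def dInv {G : Type*} [AddMonoid G] (x : G) : ℕ :=
  sInf {k : ℕ | 0 < k ∧ (3 * k) • x = 0}

/-- `rcount ℓ` is the number of elements `a ∈ ℤ/(3ℓ)` such that `dInv a = ℓ`. -/
noncomputable def rcount (ℓ : ℕ) : ℕ :=
  Nat.card {a : ZMod (3 * ℓ) // dInv a = ℓ}

/-- `scount k ℓ` is the number of pairs `x = (a,b) ∈ ℤ/(3k) × ℤ/(3k)` such that
`dInv x = k` and `dInv a = ℓ`. -/
noncomputable def scount (k ℓ : ℕ) : ℕ :=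
  Nat.card {x : ZMod (3 * k) × ZMod (3 * k) // dInv x = k ∧ dInv x.1 = ℓ}

lemma dInv_mem {G : Type*} [AddMonoid G] {x : G}
    (h : {k : ℕ | 0 < k ∧ (3 * k) • x = 0}.Nonempty) :
    0 < dInv x ∧ (3 * dInv x) • x = 0 := Nat.sInf_mem h

lemma dInv_dvd {G : Type*} [AddMonoid G] {x : G}
    (h : {k : ℕ | 0 < k ∧ (3 * k) • x = 0}.Nonempty) {m : ℕ} (hm : (3 * m) • x = 0) :
    dInv x ∣ m := by
  obtain ⟨hpos, hx⟩ := dInv_mem h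
  set e := dInv x with he
  have key : 3 * m = (m / e) * (3 * e) + 3 * (m % e) := by
    conv_lhs => rw [← Nat.div_add_mod m e]
    ring
  have hq : ((m / e) * (3 * e)) • x = 0 := by
    rw [mul_nsmul', hx, nsmul_zero]
  have hr : (3 * (m % e)) • x = 0 := by
    rw [key, add_nsmul, hq, zero_add] at hm
    exact hm
  have hr0 : m % e = 0 := by
    by_contra hne
    have hlt : m % e < e := Nat.mod_lt _ hpos
    have : e ≤ m % e := Nat.sInf_le ⟨Nat.pos_of_ne_zero hne, hr⟩
    omega
  exact Nat.dvd_of_mod_eq_zero hr0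

lemma dInv_map {G H : Type*} [AddMonoid G] [AddMonoid H] (f : G →+ H)
    (hf : Injective f) (x : G) : dInv (f x) = dInv x := by
  unfold dInv
  congr 1
  ext k
  simp only [Set.mem_setOf_eq, ← map_nsmul]
  rw [map_eq_zero_iff f hf]

lemma smul_zmod_self {n : ℕ} (y : ZMod n) : n • y = 0 := by
  rw [nsmul_eq_mul, ZMod.natCast_self, zero_mul]

lemma dInv_nonempty_zmod {n : ℕ} (hn : 0 < n) (x : ZMod (3 * n)) :
    {k : ℕ | 0 < k ∧ (3 * k) • x = 0}.Nonempty :=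
  ⟨n, hn, smul_zmod_self x⟩

lemma dInv_nonempty_zmod_pair {n : ℕ} (hn : 0 < n) (x : ZMod (3 * n) × ZMod (3 * n)) :
    {k : ℕ | 0 < k ∧ (3 * k) • x = 0}.Nonempty := by
  refine ⟨n, hn, ?_⟩
  have : (3 * n) • x = ((3 * n) • x.1, (3 * n) • x.2) := rfl
  rw [this, smul_zmod_self, smul_zmod_self]
  rfl

/-- The embedding `ZMod (3m) →+ ZMod (3n)` for `m ∣ n`. -/
lemma exists_hom {m n : ℕ} (hm : 0 < m) (hn : 0 < n) (hmn : m ∣ n) :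
    ∃ f : ZMod (3 * m) →+ ZMod (3 * n), Injective f ∧
      ∀ y : ZMod (3 * n), (3 * m) • y = 0 → y ∈ Set.range f := by
  obtain ⟨c, rfl⟩ := hmn
  have hc : 0 < c := Nat.pos_of_ne_zero fun h => by simp [h] at hn
  have h3 : NeZero (3 * m) := ⟨by omega⟩
  have h3n : NeZero (3 * (m * c)) := ⟨by positivity⟩
  set g : ℤ →+ ZMod (3 * (m * c)) := zmultiplesHom _ ((c : ℕ) : ZMod (3 * (m * c))) with hg
  have hker : g ((3 * m : ℕ) : ℤ) = 0 := by
    show ((3 * m : ℕ) : ℤ) • ((c : ℕ) : ZMod (3 * (m * c))) = 0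
    rw [zsmul_eq_mul]
    have : (((3 * m : ℕ) : ℤ) : ZMod (3 * (m * c))) * ((c : ℕ) : ZMod (3 * (m * c)))
        = ((3 * (m * c) : ℕ) : ZMod (3 * (m * c))) := by push_cast; ring
    rw [this, ZMod.natCast_self]
  set f : ZMod (3 * m) →+ ZMod (3 * (m * c)) := ZMod.lift (3 * m) ⟨g, hker⟩ with hf
  have hcast : ∀ a : ℕ, f ((a : ℕ) : ZMod (3 * m)) = ((a * c : ℕ) : ZMod (3 * (m * c))) := by
    intro a
    have h1 : ((a : ℕ) : ZMod (3 * m)) = ((a : ℤ) : ZMod (3 * m)) := by push_cast; rfl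
    rw [h1, hf, ZMod.lift_coe]
    show ((a : ℤ)) • ((c : ℕ) : ZMod (3 * (m * c))) = _
    rw [zsmul_eq_mul]
    push_cast
    ring
  have hinj : Injective f := by
    rw [injective_iff_map_eq_zero f]
    intro x hx
    have hval : ((x.val : ℕ) : ZMod (3 * m)) = x := ZMod.natCast_rightInverse x
    rw [← hval, hcast, ZMod.natCast_eq_zero_iff] at hx
    have hdv : 3 * m ∣ x.val := by
      rw [show 3 * (m * c) = (3 * m) * c by ring] at hx
      exact (Nat.mul_dvd_mul_iff_right hc).mp hx
    have hv0 : x.val = 0 := Nat.eq_zero_of_dvd_of_lt hdv (ZMod.val_lt x)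
    rw [← hval, hv0, Nat.cast_zero]
  refine ⟨f, hinj, ?_⟩
  intro y hy
  rw [nsmul_eq_mul] at hy
  have hval : ((y.val : ℕ) : ZMod (3 * (m * c))) = y := ZMod.natCast_rightInverse y
  have h0 : ((3 * m * y.val : ℕ) : ZMod (3 * (m * c))) = 0 := by
    rw [Nat.cast_mul, hval, hy]
  rw [ZMod.natCast_eq_zero_iff] at h0
  have hcd : c ∣ y.val := by
    obtain ⟨t, ht⟩ := h0
    exact ⟨t, Nat.eq_of_mul_eq_mul_left (show 0 < 3 * m by omega)
      (by rw [ht]; ring)⟩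
  refine ⟨((y.val / c : ℕ) : ZMod (3 * m)), ?_⟩
  rw [hcast, Nat.div_mul_cancel hcd, hval]

lemma card_single {m n : ℕ} (hm : 0 < m) (hn : 0 < n) (hmn : m ∣ n) :
    Nat.card {a : ZMod (3 * n) // dInv a = m} = rcount m := by
  obtain ⟨f, hfi, hfr⟩ := exists_hom hm hn hmn
  rw [rcount]
  refine (Nat.card_congr (Equiv.ofBijective
    (fun a : {a : ZMod (3 * m) // dInv a = m} =>
      (⟨f a.1, by rw [dInv_map f hfi]; exact a.2⟩ : {a : ZMod (3 * n) // dInv a = m}))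
    ⟨?_, ?_⟩)).symm
  · intro a b hab
    exact Subtype.ext (hfi (congrArg Subtype.val hab))
  · rintro ⟨y, hy⟩
    have h30 : (3 * m) • y = 0 := by
      have := (dInv_mem (dInv_nonempty_zmod hn y)).2
      rwa [hy] at this
    obtain ⟨x, rfl⟩ := hfr y h30
    exact ⟨⟨x, by rw [← dInv_map f hfi]; exact hy⟩, rfl⟩

lemma card_pair {k n ℓ : ℕ} (hk : 0 < k) (hn : 0 < n) (hkn : k ∣ n) :
    Nat.card {x : ZMod (3 * n) × ZMod (3 * n) // dInv x = k ∧ dInv x.1 = ℓ}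
      = scount k ℓ := by
  obtain ⟨f, hfi, hfr⟩ := exists_hom hk hn hkn
  set F : ZMod (3 * k) × ZMod (3 * k) →+ ZMod (3 * n) × ZMod (3 * n) := f.prodMap f with hF
  have hFi : Injective F := hfi.prodMap hfi
  rw [scount]
  refine (Nat.card_congr (Equiv.ofBijective
    (fun x : {x : ZMod (3 * k) × ZMod (3 * k) // dInv x = k ∧ dInv x.1 = ℓ} =>
      (⟨F x.1, by
        constructor
        · rw [dInv_map F hFi]; exact x.2.1
        · show dInv (f x.1.1) = ℓ
          rw [dInv_map f hfi]; exact x.2.2⟩ :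
        {x : ZMod (3 * n) × ZMod (3 * n) // dInv x = k ∧ dInv x.1 = ℓ}))
    ⟨?_, ?_⟩)).symm
  · intro a b hab
    exact Subtype.ext (hFi (congrArg Subtype.val hab))
  · rintro ⟨y, hy1, hy2⟩
    have h30 : (3 * k) • y = 0 := by
      have := (dInv_mem (dInv_nonempty_zmod_pair hn y)).2
      rwa [hy1] at this
    have h1 : (3 * k) • y.1 = 0 := congrArg Prod.fst h30
    have h2 : (3 * k) • y.2 = 0 := congrArg Prod.snd h30
    obtain ⟨a, ha⟩ := hfr y.1 h1
    obtain ⟨b, hb⟩ := hfr y.2 h2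
    have hFy : F (a, b) = y := by
      ext
      · exact ha
      · exact hb
    refine ⟨⟨(a, b), ?_, ?_⟩, Subtype.ext hFy⟩
    · rw [← dInv_map F hFi, hFy]; exact hy1
    · show dInv a = ℓ
      rw [← dInv_map f hfi, show f a = y.1 from ha]; exact hy2

/-- Let `ℓ, d` be positive integers with `ℓ ∣ d`. Then
`∑_{k : ℓ∣k, k∣d} s_{k,ℓ} = 3d · r_ℓ`, the sum being over positive integers `k` that are
multiples of `ℓ` and divisors of `d`. -/
theorem stmt_6 (ℓ d : ℕ) (hℓ : 0 < ℓ) (hd : 0 < d) (hdvd : ℓ ∣ d) :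
    ∑ k ∈ d.divisors.filter (fun k => ℓ ∣ k), scount k ℓ = 3 * d * rcount ℓ := by
  classical
  have hN : NeZero (3 * d) := ⟨by omega⟩
  set M := ZMod (3 * d) × ZMod (3 * d) with hM
  -- step 1: each summand is a fiber cardinality in (ZMod 3d)²
  have step1 : ∀ k ∈ d.divisors.filter (fun k => ℓ ∣ k),
      scount k ℓ = (Finset.univ.filter (fun x : M => dInv x = k ∧ dInv x.1 = ℓ)).card := by
    intro k hk
    simp only [Finset.mem_filter, Nat.mem_divisors] at hk
    rw [← card_pair (Nat.pos_of_mem_divisors (Nat.mem_divisors.mpr hk.1)) hd hk.1.1,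
      Nat.card_eq_fintype_card, Fintype.card_subtype]
  rw [Finset.sum_congr rfl step1]
  -- step 2: fiberwise count
  have hfib : ∀ x : M, x ∈ Finset.univ.filter (fun x : M => dInv x.1 = ℓ) →
      dInv x ∈ d.divisors.filter (fun k => ℓ ∣ k) := by
    intro x hx
    simp only [Finset.mem_filter, Finset.mem_univ, true_and] at hx
    have hne := dInv_nonempty_zmod_pair hd x
    have hdd : dInv x ∣ d := by
      refine dInv_dvd hne ?_
      have : (3 * d) • x = ((3 * d) • x.1, (3 * d) • x.2) := rfl
      rw [this, smul_zmod_self, smul_zmod_self]; rfl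
    have hx30 : (3 * dInv x) • x = 0 := (dInv_mem hne).2
    have hℓd : ℓ ∣ dInv x := by
      rw [← hx]
      exact dInv_dvd (dInv_nonempty_zmod hd x.1) (congrArg Prod.fst hx30)
    simp only [Finset.mem_filter, Nat.mem_divisors]
    exact ⟨⟨hdd, by omega⟩, hℓd⟩
  have step2 : ∑ k ∈ d.divisors.filter (fun k => ℓ ∣ k),
      (Finset.univ.filter (fun x : M => dInv x = k ∧ dInv x.1 = ℓ)).card
      = (Finset.univ.filter (fun x : M => dInv x.1 = ℓ)).card := by
    rw [Finset.card_eq_sum_card_fiberwise hfib]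
    refine Finset.sum_congr rfl fun k _ => ?_
    rw [Finset.filter_filter]
    congr 1
    ext x
    simp [and_comm]
  rw [step2]
  -- step 3: the total count is 3d · rcount ℓ
  have e3 : {x : M // dInv x.1 = ℓ} ≃ {a : ZMod (3 * d) // dInv a = ℓ} × ZMod (3 * d) :=
    { toFun := fun x => (⟨x.1.1, x.2⟩, x.1.2)
      invFun := fun y => ⟨(y.1.1, y.2), y.1.2⟩
      left_inv := fun x => rfl
      right_inv := fun y => rfl }
  rw [← Fintype.card_subtype, Fintype.card_congr e3, Fintype.card_prod, ZMod.card,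
    ← Nat.card_eq_fintype_card, card_single hℓ hd hdvd]
  ring
end

section
/- Let d be a positive integer and let G = ℤ/(3d) × ℤ/(3d). Suppose x, x' ∈ G satisfy d(x) = d(x'), where d(·) assigns to an element the smallest positive integer k such that (3k)·(that element) = 0. Then there exists t ∈ G with 3·t = 0 such that the additive order of x + t and the additive order of x' + t are both equal to 3·d(x). -/
section Aux

variable {G : Type*} [AddCommGroup G] [Finite G]

lemma dInv_eq_addOrderOf (x : G) : dInv x = addOrderOf ((3 : ℕ) • x) := by
  have hset : {k : ℕ | 0 < k ∧ (3 * k) • x = 0}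
      = {k : ℕ | 0 < k ∧ k • ((3 : ℕ) • x) = 0} := by
    ext k
    simp [mul_nsmul]
  have hmem : addOrderOf ((3 : ℕ) • x) ∈ {k : ℕ | 0 < k ∧ k • ((3 : ℕ) • x) = 0} :=
    ⟨addOrderOf_pos _, addOrderOf_nsmul_eq_zero _⟩
  rw [dInv, hset]
  refine le_antisymm (Nat.sInf_le hmem) ?_
  obtain ⟨hpos, hzero⟩ := Nat.sInf_mem (⟨_, hmem⟩ :
    {k : ℕ | 0 < k ∧ k • ((3 : ℕ) • x) = 0}.Nonempty)
  exact Nat.le_of_dvd hpos (addOrderOf_dvd_of_nsmul_eq_zero hzero)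

lemma dInv_eq_div (x : G) : dInv x = addOrderOf x / Nat.gcd (addOrderOf x) 3 := by
  rw [dInv_eq_addOrderOf, addOrderOf_nsmul' x (n := 3) (by norm_num)]

lemma dInv_pos (x : G) : 0 < dInv x := by
  rw [dInv_eq_addOrderOf]; exact addOrderOf_pos _

lemma dInv_dvd_addOrderOf (x : G) : dInv x ∣ addOrderOf x := by
  rw [dInv_eq_div]
  exact Nat.div_dvd_of_dvd (Nat.gcd_dvd_left _ _)

lemma addOrderOf_eq_of_dInv_nsmul_ne_zero (x : G) (hx : (dInv x) • x ≠ 0) :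
    addOrderOf x = 3 * dInv x := by
  have hg : Nat.gcd (addOrderOf x) 3 = 1 ∨ Nat.gcd (addOrderOf x) 3 = 3 :=
    (Nat.dvd_prime Nat.prime_three).mp (Nat.gcd_dvd_right (addOrderOf x) 3)
  rcases hg with hg | hg
  · exfalso
    apply hx
    have : dInv x = addOrderOf x := by rw [dInv_eq_div, hg, Nat.div_one]
    rw [this]
    exact addOrderOf_nsmul_eq_zero x
  · have h3 : 3 ∣ addOrderOf x := hg ▸ Nat.gcd_dvd_left _ _
    rw [dInv_eq_div, hg]
    omega

lemma dInv_add_eq (x t : G) (ht : (3 : ℕ) • t = 0) : dInv (x + t) = dInv x := by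
  rw [dInv_eq_addOrderOf, dInv_eq_addOrderOf, smul_add, ht, add_zero]

end Aux

/-- Let `d` be a positive integer and `G = ℤ/(3d) × ℤ/(3d)`. If
`x, x' ∈ G` satisfy `dInv x = dInv x'`, then there exists `t ∈ G` with `3 • t = 0` such
that the additive orders of `x + t` and `x' + t` are both `3 * dInv x`. -/
theorem stmt_7 (d : ℕ) (hd : 0 < d)
    (x x' : ZMod (3 * d) × ZMod (3 * d)) (h : dInv x = dInv x') :
    ∃ t : ZMod (3 * d) × ZMod (3 * d), 3 • t = 0 ∧
      addOrderOf (x + t) = 3 * dInv x ∧ addOrderOf (x' + t) = 3 * dInv x := by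
  haveI : NeZero (3 * d) := ⟨by omega⟩
  set k := dInv x with hk
  -- It suffices to find `t` of order dividing 3 with `k • (x + t) ≠ 0` and `k • (x' + t) ≠ 0`.
  have key : ∀ t : ZMod (3 * d) × ZMod (3 * d), (3 : ℕ) • t = 0 →
      k • (x + t) ≠ 0 → k • (x' + t) ≠ 0 →
      addOrderOf (x + t) = 3 * k ∧ addOrderOf (x' + t) = 3 * k := by
    intro t ht h1 h2
    have e1 : dInv (x + t) = k := dInv_add_eq x t ht
    have e2 : dInv (x' + t) = k := by rw [dInv_add_eq x' t ht, ← h]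
    constructor
    · rw [addOrderOf_eq_of_dInv_nsmul_ne_zero (x + t) (by rw [e1]; exact h1), e1]
    · rw [addOrderOf_eq_of_dInv_nsmul_ne_zero (x' + t) (by rw [e2]; exact h2), e2]
  by_cases h3 : 3 ∣ k
  · -- `t = 0` works: `k • x ≠ 0` since otherwise `k = addOrderOf x` has gcd 1 with 3.
    have main : ∀ y : ZMod (3 * d) × ZMod (3 * d), dInv y = k → k • y ≠ 0 := by
      intro y hy hzero
      have hdvd1 : addOrderOf y ∣ k := addOrderOf_dvd_of_nsmul_eq_zero hzero
      have hdvd2 : dInv y ∣ addOrderOf y := dInv_dvd_addOrderOf y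
      rw [hy] at hdvd2
      have hkeq : k = addOrderOf y :=
        Nat.dvd_antisymm hdvd2 hdvd1
      have : Nat.gcd (addOrderOf y) 3 = 3 := Nat.gcd_eq_right (hkeq ▸ h3)
      have hdiv := dInv_eq_div y
      rw [hy, this, ← hkeq] at hdiv
      have hkpos : 0 < k := dInv_pos x
      omega
    refine ⟨0, by simp, ?_⟩
    have := key 0 (by simp) (by simpa using main x rfl) (by simpa using main x' h.symm)
    simpa using this
  · -- `3 ∤ k` : one of `0, (d, 0), (0, d)` works, by pigeonhole.
    have hc : ((k * d : ℕ) : ZMod (3 * d)) ≠ 0 := by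
      rw [Ne, ZMod.natCast_eq_zero_iff]
      intro hdvd
      exact h3 ((Nat.mul_dvd_mul_iff_right hd).mp hdvd)
    have ht1 : (3 : ℕ) • (((d : ZMod (3 * d)), (0 : ZMod (3 * d))) : ZMod (3 * d) × ZMod (3 * d)) = 0 := by
      have : (3 : ℕ) • (d : ZMod (3 * d)) = ((3 * d : ℕ) : ZMod (3 * d)) := by push_cast; ring
      rw [Prod.ext_iff]
      constructor
      · simp [this]
      · simp
    have ht2 : (3 : ℕ) • (((0 : ZMod (3 * d)), (d : ZMod (3 * d))) : ZMod (3 * d) × ZMod (3 * d)) = 0 := by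
      have : (3 : ℕ) • (d : ZMod (3 * d)) = ((3 * d : ℕ) : ZMod (3 * d)) := by push_cast; ring
      rw [Prod.ext_iff]
      constructor
      · simp
      · simp [this]
    have hkd1 : k • (((d : ZMod (3 * d)), (0 : ZMod (3 * d))) : ZMod (3 * d) × ZMod (3 * d))
        = (((k * d : ℕ) : ZMod (3 * d)), 0) := by
      rw [Prod.ext_iff]; constructor
      · show k • (d : ZMod (3 * d)) = ((k * d : ℕ) : ZMod (3 * d)); push_cast; ring
      · simp
    have hkd2 : k • (((0 : ZMod (3 * d)), (d : ZMod (3 * d))) : ZMod (3 * d) × ZMod (3 * d))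
        = (0, ((k * d : ℕ) : ZMod (3 * d))) := by
      rw [Prod.ext_iff]; constructor
      · simp
      · show k • (d : ZMod (3 * d)) = ((k * d : ℕ) : ZMod (3 * d)); push_cast; ring
    by_contra hcon
    push_neg at hcon
    -- each of the three candidates fails
    have f0 : k • x = 0 ∨ k • x' = 0 := by
      by_contra hf; push_neg at hf
      obtain ⟨a, b⟩ := key 0 (by simp) (by simpa using hf.1) (by simpa using hf.2)
      exact (hcon 0 (by simp) (by simpa using a)) (by simpa using b)
    have f1 : k • x + (((k * d : ℕ) : ZMod (3 * d)), 0) = 0 ∨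
        k • x' + (((k * d : ℕ) : ZMod (3 * d)), 0) = 0 := by
      by_contra hf; push_neg at hf
      have g1 : k • (x + ((d : ZMod (3 * d)), 0)) ≠ 0 := by
        rw [smul_add, hkd1]; exact hf.1
      have g2 : k • (x' + ((d : ZMod (3 * d)), 0)) ≠ 0 := by
        rw [smul_add, hkd1]; exact hf.2
      obtain ⟨a, b⟩ := key _ ht1 g1 g2
      exact (hcon _ ht1 a) b
    have f2 : k • x + (0, ((k * d : ℕ) : ZMod (3 * d))) = 0 ∨
        k • x' + (0, ((k * d : ℕ) : ZMod (3 * d))) = 0 := by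
      by_contra hf; push_neg at hf
      have g1 : k • (x + ((0 : ZMod (3 * d)), (d : ZMod (3 * d)))) ≠ 0 := by
        rw [smul_add, hkd2]; exact hf.1
      have g2 : k • (x' + ((0 : ZMod (3 * d)), (d : ZMod (3 * d)))) ≠ 0 := by
        rw [smul_add, hkd2]; exact hf.2
      obtain ⟨a, b⟩ := key _ ht2 g1 g2
      exact (hcon _ ht2 a) b
    -- pigeonhole: two of the three conditions concern the same element, contradiction
    set c : ZMod (3 * d) := ((k * d : ℕ) : ZMod (3 * d)) with hcdef
    have pig : ∀ u : ZMod (3 * d) × ZMod (3 * d),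
        ¬ (u = 0 ∧ u + (c, 0) = 0) ∧ ¬ (u = 0 ∧ u + (0, c) = 0) ∧
        ¬ (u + (c, 0) = 0 ∧ u + (0, c) = 0) := by
      intro u
      refine ⟨?_, ?_, ?_⟩
      · rintro ⟨rfl, h2⟩
        rw [zero_add, Prod.ext_iff] at h2
        exact hc h2.1
      · rintro ⟨rfl, h2⟩
        rw [zero_add, Prod.ext_iff] at h2
        exact hc h2.2
      · rintro ⟨h1, h2⟩
        have : ((c, 0) : ZMod (3 * d) × ZMod (3 * d)) = (0, c) := by
          have := h1.trans h2.symm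
          exact add_left_cancel this
        rw [Prod.ext_iff] at this
        exact hc this.1
    rcases f0 with f0 | f0 <;> rcases f1 with f1 | f1 <;> rcases f2 with f2 | f2
    · exact (pig (k • x)).1 ⟨f0, f1⟩
    · exact (pig (k • x)).1 ⟨f0, f1⟩
    · exact (pig (k • x)).2.1 ⟨f0, f2⟩
    · exact (pig (k • x')).2.2 ⟨f1, f2⟩
    · exact (pig (k • x)).2.2 ⟨f1, f2⟩
    · exact (pig (k • x')).2.1 ⟨f0, f2⟩
    · exact (pig (k • x')).1 ⟨f0, f1⟩
    · exact (pig (k • x')).1 ⟨f0, f1⟩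
end

section
/- Let c : ℤ_{>0} × ℤ_{>0} → ℚ be any function, let A : ℤ_{>0} × ℤ → ℚ be any function, and let B assign a rational number to each pair (d,k) of positive integers with k ∣ d. For a positive integer d and integer χ set ℓ_{d,χ} := d / gcd(d,χ), with gcd(d,0) = d. Suppose that for every positive integer d and every integer χ: ∑_{d' : ℓ_{d,χ}∣d'∣d} (d'/d)² · A(d', χ·d'/d) = ∑_{d' : ℓ_{d,χ}∣d'∣d} (d'/d)² · ∑_{k : ℓ_{d,χ}∣k∣d'} c(k, ℓ_{d,χ}) · B(d', k). Then for every positive integer d and every integer χ: A(d,χ) = ∑_{k : ℓ_{d,χ}∣k∣d} c(k, ℓ_{d,χ}) · B(d,k). -/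
/-- Let `c : ℤ_{>0} × ℤ_{>0} → ℚ`, `A : ℤ_{>0} × ℤ → ℚ`, and let `B`
assign a rational number to each pair `(d,k)` of positive integers with `k ∣ d`. For
positive `d` and integer `χ` set `ℓ_{d,χ} := d / gcd(d,χ)` (nonnegative gcd, so
`gcd(d,0) = d`). Suppose that for every positive `d` and every `χ`:
`∑_{d' : ℓ_{d,χ}∣d'∣d} (d'/d)² A(d', χd'/d)
  = ∑_{d' : ℓ_{d,χ}∣d'∣d} (d'/d)² ∑_{k : ℓ_{d,χ}∣k∣d'} c(k, ℓ_{d,χ}) B(d', k)`.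
Then for every positive `d` and every `χ`:
`A(d,χ) = ∑_{k : ℓ_{d,χ}∣k∣d} c(k, ℓ_{d,χ}) B(d,k)`. -/
theorem stmt_12 (c : ℕ → ℕ → ℚ) (A : ℕ → ℤ → ℚ) (B : ℕ → ℕ → ℚ)
    (H : ∀ d : ℕ, 0 < d → ∀ χ : ℤ,
      ∑ d' ∈ d.divisors.filter (fun d' => (d / Int.gcd d χ) ∣ d'),
          ((d' : ℚ) / (d : ℚ)) ^ 2 * A d' (χ * (d' : ℤ) / (d : ℤ))
        = ∑ d' ∈ d.divisors.filter (fun d' => (d / Int.gcd d χ) ∣ d'),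
            ((d' : ℚ) / (d : ℚ)) ^ 2 *
              ∑ k ∈ d'.divisors.filter (fun k => (d / Int.gcd d χ) ∣ k),
                c k (d / Int.gcd d χ) * B d' k) :
    ∀ d : ℕ, 0 < d → ∀ χ : ℤ,
      A d χ = ∑ k ∈ d.divisors.filter (fun k => (d / Int.gcd d χ) ∣ k),
        c k (d / Int.gcd d χ) * B d k := by
  have main : ∀ g : ℕ, ∀ d : ℕ, 0 < d → ∀ χ : ℤ, Int.gcd (d : ℤ) χ = g →
      A d χ = ∑ k ∈ d.divisors.filter (fun k => (d / Int.gcd d χ) ∣ k),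
        c k (d / Int.gcd d χ) * B d k := by
    intro g
    induction g using Nat.strong_induction_on with
    | _ g IH =>
      intro d hd χ hg
      have hgpos : 0 < g := by
        rcases Nat.eq_zero_or_pos g with h0 | h
        · rw [h0, Int.gcd_eq_zero_iff] at hg
          exact absurd (by exact_mod_cast hg.1) hd.ne'
        · exact h
      have hgd : g ∣ d := by
        rw [← hg]
        exact Int.natCast_dvd_natCast.mp (by exact_mod_cast (Int.gcd_dvd_left (d:ℤ) χ : _ ∣ (d:ℤ)))
      set ℓ := d / g with hℓ
      have hℓd : ℓ ∣ d := Nat.div_dvd_of_dvd hgd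
      have hdeq : d = ℓ * g := (Nat.div_mul_cancel hgd).symm
      have hℓpos : 0 < ℓ := Nat.pos_of_ne_zero (by rintro h; rw [h] at hdeq; simp at hdeq; omega)
      obtain ⟨χ₀, hχ₀⟩ : (g : ℤ) ∣ χ := by rw [← hg]; exact Int.gcd_dvd_right _ _
      have hcop : Int.gcd (ℓ : ℤ) χ₀ = 1 := by
        have h1 : Int.gcd ((g : ℤ) * ℓ) ((g : ℤ) * χ₀) = g * Int.gcd (ℓ : ℤ) χ₀ := by
          rw [Int.gcd_mul_left]; simp
        have h2 : ((g : ℤ) * ℓ) = (d : ℤ) := by push_cast [hdeq]; ring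
        rw [h2, ← hχ₀, hg] at h1
        exact (Nat.eq_of_mul_eq_mul_left hgpos (by rw [mul_one, ← h1])).symm
      have hd0 : (d : ℤ) ≠ 0 := by exact_mod_cast hd.ne'
      -- per-element facts
      have key : ∀ m ∈ d.divisors.filter (fun m => ℓ ∣ m), m ≠ d →
          ((m : ℚ) / d) ^ 2 * A m (χ * (m : ℤ) / (d : ℤ))
            = ((m : ℚ) / d) ^ 2 *
              ∑ k ∈ m.divisors.filter (fun k => ℓ ∣ k), c k ℓ * B m k := by
        intro m hm hmd
        simp only [Finset.mem_filter, Nat.mem_divisors] at hm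
        obtain ⟨⟨hmdvd, _⟩, hℓm⟩ := hm
        obtain ⟨t, ht⟩ := hℓm
        have hmpos : 0 < m := Nat.pos_of_dvd_of_pos hmdvd hd
        have htpos : 0 < t := by
          rcases Nat.eq_zero_or_pos t with h | h
          · rw [h, mul_zero] at ht; omega
          · exact h
        have hχ' : χ * (m : ℤ) / (d : ℤ) = χ₀ * t := by
          have hmul : χ * (m : ℤ) = (d : ℤ) * (χ₀ * t) := by
            rw [hχ₀]; push_cast [ht, hdeq]; ring
          rw [hmul, Int.mul_ediv_cancel_left _ hd0]
        have hgcd : Int.gcd (m : ℤ) (χ₀ * t) = t := by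
          have hmz : (m : ℤ) = (ℓ : ℤ) * t := by push_cast [ht]; ring
          rw [hmz, Int.gcd_mul_right, hcop, one_mul, Int.natAbs_natCast]
        have htlt : t < g := by
          have hmlt : m < d := Nat.lt_of_le_of_ne (Nat.le_of_dvd hd hmdvd) hmd
          rw [ht, hdeq] at hmlt
          exact Nat.lt_of_mul_lt_mul_left hmlt
        have hmdiv : m / Int.gcd (m : ℤ) (χ₀ * t) = ℓ := by
          rw [hgcd, ht]
          rw [Nat.mul_div_assoc ℓ dvd_rfl, Nat.div_self htpos, mul_one]
        have := IH t htlt m hmpos (χ₀ * t) hgcd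
        rw [hmdiv] at this
        rw [hχ', this]
      -- conclude
      have hH := H d hd χ
      simp only [hg, ← hℓ] at hH ⊢
      have hdS : d ∈ d.divisors.filter (fun m => ℓ ∣ m) := by
        simp [Nat.mem_divisors, hd.ne', hℓd]
      rw [← Finset.add_sum_erase _ _ hdS, ← Finset.add_sum_erase _ _ hdS] at hH
      have heq : ∑ m ∈ (d.divisors.filter (fun m => ℓ ∣ m)).erase d,
            ((m : ℚ) / d) ^ 2 * A m (χ * (m : ℤ) / (d : ℤ))
          = ∑ m ∈ (d.divisors.filter (fun m => ℓ ∣ m)).erase d,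
            ((m : ℚ) / d) ^ 2 * ∑ k ∈ m.divisors.filter (fun k => ℓ ∣ k), c k ℓ * B m k :=
        Finset.sum_congr rfl fun m hm =>
          key m (Finset.mem_of_mem_erase hm) (Finset.ne_of_mem_erase hm)
      rw [heq] at hH
      have hfinal := add_right_cancel hH
      have h1 : ((d : ℚ) / d) = 1 := div_self (by exact_mod_cast hd.ne')
      have h2 : χ * (d : ℤ) / (d : ℤ) = χ := Int.mul_ediv_cancel χ hd0
      rw [h1, h2, one_pow, one_mul, one_mul] at hfinal
      exact hfinal
  intro d hd χ
  exact main (Int.gcd (d : ℤ) χ) d hd χ rfl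
end

section
/- Let N̄ assign a rational number to each pair (d,k) of positive integers with k ∣ d, and let Ω be a function on such pairs satisfying, for all (d,k) with k ∣ d: N̄(d,k) = ∑_{d' : k∣d'∣d} (d'/d)² · Ω(d',k), the sum being over positive divisors d' of d that are multiples of k. Then the following are equivalent: (i) for every positive integer d, the value Ω(d,k) is the same for all positive divisors k of d; (ii) for every pair (d,k) with k ∣ d: N̄(d,k) = ∑_{d' : k∣d'∣d} (d'/d)² · N̄(d',d'). -/
/-- Let `N̄` assign a rational number to each pair `(d,k)` of positive
integers with `k ∣ d`, and let `Ω` satisfy, for all such pairs,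
`N̄(d,k) = ∑_{d' : k∣d'∣d} (d'/d)² Ω(d',k)`. Then the following are equivalent:
(i) for every positive `d`, `Ω(d,k)` is the same for all positive divisors `k` of `d`;
(ii) for every pair `(d,k)` with `k ∣ d`,
`N̄(d,k) = ∑_{d' : k∣d'∣d} (d'/d)² N̄(d',d')`. -/
theorem stmt_14 (Nbar Ω : ℕ → ℕ → ℚ)
    (hrel : ∀ d k : ℕ, 0 < d → 0 < k → k ∣ d →
      Nbar d k = ∑ d' ∈ d.divisors.filter (fun d' => k ∣ d'),
        ((d' : ℚ) / (d : ℚ)) ^ 2 * Ω d' k) :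
    (∀ d : ℕ, 0 < d → ∀ k k' : ℕ, 0 < k → 0 < k' → k ∣ d → k' ∣ d → Ω d k = Ω d k') ↔
    (∀ d k : ℕ, 0 < d → 0 < k → k ∣ d →
      Nbar d k = ∑ d' ∈ d.divisors.filter (fun d' => k ∣ d'),
        ((d' : ℚ) / (d : ℚ)) ^ 2 * Nbar d' d') := by
  have hdd : ∀ d : ℕ, 0 < d → Nbar d d = Ω d d := by
    intro d hd
    have h := hrel d d hd hd dvd_rfl
    have hset : d.divisors.filter (fun d' => d ∣ d') = {d} := by
      ext x
      simp only [Finset.mem_filter, Nat.mem_divisors, Finset.mem_singleton]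
      constructor
      · rintro ⟨⟨h1, _⟩, h2⟩
        exact Nat.dvd_antisymm h1 h2
      · rintro rfl
        exact ⟨⟨dvd_rfl, hd.ne'⟩, dvd_rfl⟩
    rw [h, hset]
    have hc : ((d : ℚ) / d) ^ 2 = 1 := by
      rw [div_self (by exact_mod_cast hd.ne')]; norm_num
    simp [hc]
  constructor
  · intro hi d k hd hk hkd
    rw [hrel d k hd hk hkd]
    refine Finset.sum_congr rfl fun d' hd' => ?_
    simp only [Finset.mem_filter, Nat.mem_divisors] at hd'
    have hd'pos : 0 < d' := Nat.pos_of_dvd_of_pos hd'.1.1 hd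
    rw [hi d' hd'pos k d' hk hd'pos hd'.2 dvd_rfl, hdd d' hd'pos]
  · intro hii
    have key : ∀ d, 0 < d → ∀ k, 0 < k → k ∣ d → Ω d k = Nbar d d := by
      intro d
      induction d using Nat.strong_induction_on with
      | _ d ih =>
        intro hd k hk hkd
        have h1 := hrel d k hd hk hkd
        have h2 := hii d k hd hk hkd
        have hmem : d ∈ d.divisors.filter (fun d' => k ∣ d') := by
          simp [Nat.mem_divisors, hd.ne', hkd]
        rw [← Finset.add_sum_erase _ _ hmem] at h1 h2
        have hsum : ∑ d' ∈ (d.divisors.filter (fun d' => k ∣ d')).erase d,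
            ((d' : ℚ) / d) ^ 2 * Ω d' k =
            ∑ d' ∈ (d.divisors.filter (fun d' => k ∣ d')).erase d,
            ((d' : ℚ) / d) ^ 2 * Nbar d' d' := by
          refine Finset.sum_congr rfl fun x hx => ?_
          simp only [Finset.mem_erase, Finset.mem_filter, Nat.mem_divisors] at hx
          have hxpos : 0 < x := Nat.pos_of_dvd_of_pos hx.2.1.1 hd
          have hxlt : x < d := lt_of_le_of_ne (Nat.le_of_dvd hd hx.2.1.1) hx.1
          rw [ih x hxlt hxpos k hk hx.2.2]
        rw [hsum] at h1
        have h3 : ((d : ℚ) / d) ^ 2 * Ω d k = ((d : ℚ) / d) ^ 2 * Nbar d d := by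
          have := h1.symm.trans h2
          linarith [this]
        have hc : ((d : ℚ) / d) ^ 2 = 1 := by
          rw [div_self (by exact_mod_cast hd.ne')]; norm_num
        rw [hc, one_mul, one_mul] at h3
        exact h3
    intro d hd k k' hk hk' hkd hk'd
    rw [key d hd k hk hkd, key d hd k' hk' hk'd]
end

section
/- Let c : ℤ_{>0} × ℤ_{>0} → ℚ be a function such that c(ℓ,ℓ) ≠ 0 for every positive integer ℓ, and such that for all positive integers ℓ ∣ d one has ∑_{k : ℓ∣k∣d} c(k,ℓ) = 3d. Let B assign a rational number to each pair (d,k) of positive integers with k ∣ d, and define A : ℤ_{>0} × ℤ → ℚ by A(d,χ) := ∑_{k : ℓ_{d,χ}∣k∣d} c(k, ℓ_{d,χ}) · B(d,k), where ℓ_{d,χ} := d / gcd(d,χ) with gcd(d,0) = d. Then the following are equivalent: (i) for every positive integer d, B(d,k) is the same for all positive divisors k of d; (ii) for every positive integer d, A(d,χ) is the same for all integers χ. Moreover, when these hold, B(d,k) = A(d,χ)/(3d) for all k ∣ d and all χ. -/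
/-- Let `c : ℤ_{>0} × ℤ_{>0} → ℚ` satisfy `c(ℓ,ℓ) ≠ 0` for all positive
`ℓ` and `∑_{k : ℓ∣k∣d} c(k,ℓ) = 3d` whenever `ℓ ∣ d` are positive. Let `B` assign a
rational number to each pair `(d,k)` of positive integers with `k ∣ d`, and let
`A(d,χ) := ∑_{k : ℓ_{d,χ}∣k∣d} c(k, ℓ_{d,χ}) B(d,k)` where `ℓ_{d,χ} := d / gcd(d,χ)`
(nonnegative gcd, `gcd(d,0) = d`). Then: `B(d,·)` is constant on positive divisors of each
positive `d` iff `A(d,·)` is constant in `χ` for each positive `d`; moreover, when these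
hold, `B(d,k) = A(d,χ)/(3d)` for all `k ∣ d` and all `χ`. -/
theorem stmt_15 (c : ℕ → ℕ → ℚ)
    (hc0 : ∀ ℓ : ℕ, 0 < ℓ → c ℓ ℓ ≠ 0)
    (hcsum : ∀ ℓ d : ℕ, 0 < ℓ → 0 < d → ℓ ∣ d →
      ∑ k ∈ d.divisors.filter (fun k => ℓ ∣ k), c k ℓ = 3 * (d : ℚ))
    (B : ℕ → ℕ → ℚ) (A : ℕ → ℤ → ℚ)
    (hA : ∀ d : ℕ, 0 < d → ∀ χ : ℤ,
      A d χ = ∑ k ∈ d.divisors.filter (fun k => (d / Int.gcd d χ) ∣ k),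
        c k (d / Int.gcd d χ) * B d k) :
    ((∀ d : ℕ, 0 < d → ∀ k k' : ℕ, k ∣ d → k' ∣ d → B d k = B d k') ↔
      (∀ d : ℕ, 0 < d → ∀ χ χ' : ℤ, A d χ = A d χ')) ∧
    ((∀ d : ℕ, 0 < d → ∀ k k' : ℕ, k ∣ d → k' ∣ d → B d k = B d k') →
      ∀ d : ℕ, 0 < d → ∀ k : ℕ, k ∣ d → ∀ χ : ℤ, B d k = A d χ / (3 * (d : ℚ))) := by
  -- ℓ_{d,χ} is a positive divisor of d
  have hldvd : ∀ (d : ℕ) (χ : ℤ), 0 < d → (d / Int.gcd d χ) ∣ d ∧ 0 < d / Int.gcd d χ := by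
    intro d χ hd
    have hg : Int.gcd (d:ℤ) χ ∣ d := by
      have := Int.gcd_dvd_left (a := (d:ℤ)) (b := χ)
      exact_mod_cast this
    have hgpos : 0 < Int.gcd (d:ℤ) χ := by
      have : (d:ℤ) ≠ 0 := by exact_mod_cast hd.ne'
      exact Int.gcd_pos_of_ne_zero_left χ this
    exact ⟨Nat.div_dvd_of_dvd hg, Nat.div_pos (Nat.le_of_dvd hd hg) hgpos⟩
  -- c d d = 3d
  have hcdd : ∀ d : ℕ, 0 < d → c d d = 3 * (d : ℚ) := by
    intro d hd
    have h := hcsum d d hd hd dvd_rfl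
    have hset : d.divisors.filter (fun k => d ∣ k) = {d} := by
      ext k
      simp only [Finset.mem_filter, Nat.mem_divisors, Finset.mem_singleton]
      constructor
      · rintro ⟨⟨hk, _⟩, hdk⟩; exact Nat.dvd_antisymm hk hdk
      · rintro rfl; exact ⟨⟨dvd_rfl, hd.ne'⟩, dvd_rfl⟩
    rw [hset, Finset.sum_singleton] at h
    exact h
  -- value of A at χ with ℓ_{d,χ} = d (e.g. χ = 1)
  have hA1 : ∀ d : ℕ, 0 < d → A d 1 = 3 * (d : ℚ) * B d d := by
    intro d hd
    have hg : Int.gcd (d:ℤ) (1:ℤ) = 1 := by simp [Int.gcd]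
    rw [hA d hd 1, hg]
    simp only [Nat.div_one]
    have hset : d.divisors.filter (fun k => d ∣ k) = {d} := by
      ext k
      simp only [Finset.mem_filter, Nat.mem_divisors, Finset.mem_singleton]
      constructor
      · rintro ⟨⟨hk, _⟩, hdk⟩; exact Nat.dvd_antisymm hk hdk
      · rintro rfl; exact ⟨⟨dvd_rfl, hd.ne'⟩, dvd_rfl⟩
    rw [hset, Finset.sum_singleton, hcdd d hd]
  -- value of A at χ = d/ℓ for ℓ ∣ d
  have hAl : ∀ (d ℓ : ℕ), 0 < d → ℓ ∣ d →
      A d ((d / ℓ : ℕ) : ℤ) = ∑ k ∈ d.divisors.filter (fun k => ℓ ∣ k), c k ℓ * B d k := by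
    intro d ℓ hd hdvd
    have hg : Int.gcd (d:ℤ) ((d / ℓ : ℕ) : ℤ) = d / ℓ := by
      rw [Int.gcd_natCast_natCast]
      exact Nat.gcd_eq_right (Nat.div_dvd_of_dvd hdvd)
    rw [hA d hd _, hg, Nat.div_div_self hdvd hd.ne']
  -- forward: B constant ⇒ A d χ = 3d * B d d
  have fwd : (∀ d : ℕ, 0 < d → ∀ k k' : ℕ, k ∣ d → k' ∣ d → B d k = B d k') →
      ∀ d : ℕ, 0 < d → ∀ χ : ℤ, A d χ = 3 * (d : ℚ) * B d d := by
    intro hB d hd χ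
    obtain ⟨hdv, hpos⟩ := hldvd d χ hd
    rw [hA d hd χ]
    have : ∀ k ∈ d.divisors.filter (fun k => (d / Int.gcd d χ) ∣ k),
        c k (d / Int.gcd d χ) * B d k = c k (d / Int.gcd d χ) * B d d := by
      intro k hk
      simp only [Finset.mem_filter, Nat.mem_divisors] at hk
      rw [hB d hd k d hk.1.1 dvd_rfl]
    rw [Finset.sum_congr rfl this, ← Finset.sum_mul, hcsum _ d hpos hd hdv]
  -- backward core: A constant ⇒ B d ℓ = B d d for all divisors ℓ
  have bwd : (∀ d : ℕ, 0 < d → ∀ χ χ' : ℤ, A d χ = A d χ') →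
      ∀ d : ℕ, 0 < d → ∀ ℓ : ℕ, ℓ ∣ d → B d ℓ = B d d := by
    intro hAc d hd
    have main : ∀ n ℓ, d - ℓ ≤ n → ℓ ∣ d → B d ℓ = B d d := by
      intro n
      induction n with
      | zero =>
        intro ℓ hle hdvd
        have h1 : ℓ ≤ d := Nat.le_of_dvd hd hdvd
        have : ℓ = d := by omega
        rw [this]
      | succ n ih =>
        intro ℓ hle hdvd
        by_cases hℓd : ℓ = d
        · rw [hℓd]
        have hℓpos : 0 < ℓ := Nat.pos_of_dvd_of_pos hdvd hd
        set S := d.divisors.filter (fun k => ℓ ∣ k) with hS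
        have hℓS : ℓ ∈ S := by
          simp [hS, Nat.mem_divisors, hdvd, hd.ne']
        -- B d k = B d d for all other k in S
        have hrest : ∀ k ∈ S.erase ℓ, c k ℓ * B d k = c k ℓ * B d d := by
          intro k hk
          rw [Finset.mem_erase] at hk
          obtain ⟨hkne, hkS⟩ := hk
          simp only [hS, Finset.mem_filter, Nat.mem_divisors] at hkS
          obtain ⟨⟨hkd, _⟩, hℓk⟩ := hkS
          have hkpos : 0 < k := Nat.pos_of_dvd_of_pos hkd hd
          have hk2 : ℓ + 1 ≤ k := by
            have := Nat.le_of_dvd hkpos hℓk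
            omega
          have hkled : k ≤ d := Nat.le_of_dvd hd hkd
          rw [ih k (by omega) hkd]
        have hsum : ∑ k ∈ S, c k ℓ * B d k
            = c ℓ ℓ * B d ℓ + ∑ k ∈ S.erase ℓ, c k ℓ * B d d := by
          rw [← Finset.add_sum_erase _ _ hℓS, Finset.sum_congr rfl hrest]
        have hcsplit : c ℓ ℓ + ∑ k ∈ S.erase ℓ, c k ℓ = 3 * (d : ℚ) :=
          (Finset.add_sum_erase S (fun k => c k ℓ) hℓS).trans (hcsum ℓ d hℓpos hd hdvd)
        have hAeq : A d ((d / ℓ : ℕ) : ℤ) = A d 1 := hAc d hd _ _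
        rw [hAl d ℓ hd hdvd, hA1 d hd] at hAeq
        rw [hsum] at hAeq
        rw [← Finset.sum_mul] at hAeq
        have hrestsum : ∑ k ∈ S.erase ℓ, c k ℓ = 3 * (d:ℚ) - c ℓ ℓ := by
          linarith [hcsplit]
        rw [hrestsum] at hAeq
        have : c ℓ ℓ * B d ℓ = c ℓ ℓ * B d d := by ring_nf at hAeq ⊢; linarith [hAeq]
        exact mul_left_cancel₀ (hc0 ℓ hℓpos) this
    intro ℓ hdvd
    exact main (d - ℓ) ℓ le_rfl hdvd
  constructor
  · constructor
    · intro hB d hd χ χ'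
      rw [fwd hB d hd χ, fwd hB d hd χ']
    · intro hAc d hd k k' hk hk'
      rw [bwd hAc d hd k hk, bwd hAc d hd k' hk']
  · intro hB d hd k hk χ
    have h3d : (3 * (d:ℚ)) ≠ 0 := by positivity
    rw [fwd hB d hd χ, hB d hd k d hk dvd_rfl]
    field_simp
end
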